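/- Let X and Y be the left-invariant vector fields on the Heisenberg group ℝ³ given by X_{(x,y,z)} = (1, 0, −y/2) and Y_{(x,y,z)} = (0, 1, x/2). Let ψ ∈ C^∞(ℝ³) satisfy Y(Yψ) = 0, and let f: ℝ² → ℝ be C¹. Define w₁, w₂: ℝ² → ℝ by w₁(x,z) = (Yψ)(x, 0, z) and w₂(x,z) = ψ(x, 0, z) + f(x,z)·(Yψ)(x, 0, z). Then for every h = (h₁, h₂, h₃) ∈ ℝ³, setting u = (h₁, h₃ − h₁h₂/2) ∈ ℝ²: (i) ψ(h) = w₂(u) + (h₂ − f(u))·w₁(u); (ii) (Yψ)(h) = w₁(u); and (iii) for the graph point p = (x, f(x,z), z + x·f(x,z)/2) with u = (x,z), (Xψ)(p) = ∇_f w₂(u) − ∇_f f(u)·w₁(u). -/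

import Mathlib

open MeasureTheory Set

/-- Partial derivative in the `x` (first) direction on `ℝ²`. -/
noncomputable def pdx (g : ℝ × ℝ → ℝ) (p : ℝ × ℝ) : ℝ := fderiv ℝ g p (1, 0)

/-- Partial derivative in the `z` (second) direction on `ℝ²`. -/
noncomputable def pdz (g : ℝ × ℝ → ℝ) (p : ℝ × ℝ) : ℝ := fderiv ℝ g p (0, 1)

/-- The intrinsic gradient operator `∇_f g = ∂_x g − f·∂_z g`. -/
noncomputable def igrad (f g : ℝ × ℝ → ℝ) (p : ℝ × ℝ) : ℝ := pdx g p - f p * pdz g p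

/-- The left-invariant horizontal field `X`, acting on functions:
`Xψ(x,y,z) = dψ(1, 0, −y/2)`. -/
noncomputable def Xop (ψ : ℝ × ℝ × ℝ → ℝ) (p : ℝ × ℝ × ℝ) : ℝ :=
  fderiv ℝ ψ p (1, 0, -p.2.1 / 2)

/-- The left-invariant horizontal field `Y`, acting on functions:
`Yψ(x,y,z) = dψ(0, 1, x/2)`. -/
noncomputable def Yop (ψ : ℝ × ℝ × ℝ → ℝ) (p : ℝ × ℝ × ℝ) : ℝ :=
  fderiv ℝ ψ p (0, 1, p.1 / 2)

lemma contDiff_Yop {ψ : ℝ × ℝ × ℝ → ℝ} (hψ : ContDiff ℝ (⊤ : ℕ∞) ψ) : ContDiff ℝ (⊤ : ℕ∞) (Yop ψ) :=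
  (hψ.fderiv_right (by simp)).clm_apply
    (contDiff_const.prodMk (contDiff_const.prodMk (contDiff_fst.div_const 2)))

lemma clm_pair (L : ℝ × ℝ →L[ℝ] ℝ) (c : ℝ) : L (1, -c) = L (1, 0) - c * L (0, 1) := by
  have h : ((1 : ℝ), -c) = (1, 0) + (-c) • ((0 : ℝ), (1 : ℝ)) := by
    simp [Prod.ext_iff]
  rw [h, map_add, L.map_smul, smul_eq_mul]; ring

lemma flow_key {ψ : ℝ × ℝ × ℝ → ℝ} (hψ : ContDiff ℝ (⊤ : ℕ∞) ψ)
    (hYY : ∀ p : ℝ × ℝ × ℝ, Yop (Yop ψ) p = 0) (x z t : ℝ) :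
    Yop ψ (x, t, z + x * t / 2) = Yop ψ (x, 0, z) ∧
      ψ (x, t, z + x * t / 2) = ψ (x, 0, z) + t * Yop ψ (x, 0, z) := by
  set c : ℝ → ℝ × ℝ × ℝ := fun t => (x, t, z + x * t / 2) with hc_def
  have hc : ∀ s : ℝ, HasDerivAt c (0, 1, x / 2) s := by
    intro s
    have h3 : HasDerivAt (fun s : ℝ => z + x * s / 2) (x / 2) s := by
      simpa using (((hasDerivAt_id s).const_mul x).div_const 2).const_add z
    exact (hasDerivAt_const s x).prodMk ((hasDerivAt_id s).prodMk h3)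
  have hder : ∀ (g : ℝ × ℝ × ℝ → ℝ), ContDiff ℝ (⊤ : ℕ∞) g → ∀ s : ℝ,
      HasDerivAt (fun s => g (c s)) (Yop g (c s)) s := by
    intro g hg s
    have := ((hg.differentiable (by simp) (c s)).hasFDerivAt).comp_hasDerivAt s (hc s)
    simpa [Yop, hc_def, Function.comp_def] using this
  have hc0 : c 0 = (x, 0, z) := by simp [hc_def]
  have hconst : ∀ s : ℝ, Yop ψ (c s) = Yop ψ (c 0) := by
    intro s
    have hdiff : Differentiable ℝ (fun s => Yop ψ (c s)) :=
      fun s => (hder (Yop ψ) (contDiff_Yop hψ) s).differentiableAt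
    have hz : ∀ s : ℝ, deriv (fun s => Yop ψ (c s)) s = 0 := by
      intro s
      rw [(hder (Yop ψ) (contDiff_Yop hψ) s).deriv]
      exact hYY (c s)
    exact is_const_of_deriv_eq_zero hdiff hz s 0
  constructor
  · rw [← hc0]; exact hconst t
  · set a : ℝ := Yop ψ (x, 0, z) with ha
    have hg2 : ∀ s : ℝ, HasDerivAt (fun s => ψ (c s) - s * a) 0 s := by
      intro s
      have h1 := (hder ψ hψ s).sub ((hasDerivAt_id s).mul_const a)
      have h2 : Yop ψ (c s) = a := by rw [ha, ← hc0]; exact hconst s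
      simpa [h2, Pi.sub_def] using h1
    have := is_const_of_deriv_eq_zero (fun s => (hg2 s).differentiableAt)
      (fun s => (hg2 s).deriv) t 0
    simp only [hc0, zero_mul, sub_zero] at this
    have hct : c t = (x, t, z + x * t / 2) := rfl
    rw [hct] at this
    linarith

/-- for a potential `ψ ∈ C^∞(ℝ³)` with `Y(Yψ) = 0` and `f : ℝ² → ℝ` C¹,
setting `w₁(x,z) = Yψ(x,0,z)` and `w₂(x,z) = ψ(x,0,z) + f(x,z)·Yψ(x,0,z)`, for every
`h ∈ ℝ³` with `u = (h₁, h₃ − h₁h₂/2)`: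
(i) `ψ(h) = w₂(u) + (h₂ − f(u))·w₁(u)`; (ii) `Yψ(h) = w₁(u)`; and
(iii) at the graph point `p = (x, f(x,z), z + x·f(x,z)/2)`,
`Xψ(p) = ∇_f w₂(x,z) − ∇_f f(x,z)·w₁(x,z)`. -/
theorem stmt18 (ψ : ℝ × ℝ × ℝ → ℝ) (hψ : ContDiff ℝ (⊤ : ℕ∞) ψ)
    (hYY : ∀ p : ℝ × ℝ × ℝ, Yop (Yop ψ) p = 0)
    (f : ℝ × ℝ → ℝ) (hf : ContDiff ℝ 1 f)
    (w₁ w₂ : ℝ × ℝ → ℝ)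
    (hw₁ : ∀ x z : ℝ, w₁ (x, z) = Yop ψ (x, 0, z))
    (hw₂ : ∀ x z : ℝ, w₂ (x, z) = ψ (x, 0, z) + f (x, z) * Yop ψ (x, 0, z)) :
    (∀ h : ℝ × ℝ × ℝ,
        ψ h = w₂ (h.1, h.2.2 - h.1 * h.2.1 / 2)
          + (h.2.1 - f (h.1, h.2.2 - h.1 * h.2.1 / 2))
            * w₁ (h.1, h.2.2 - h.1 * h.2.1 / 2)) ∧
    (∀ h : ℝ × ℝ × ℝ, Yop ψ h = w₁ (h.1, h.2.2 - h.1 * h.2.1 / 2)) ∧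
    (∀ x z : ℝ,
        Xop ψ (x, f (x, z), z + x * f (x, z) / 2)
          = igrad f w₂ (x, z) - igrad f f (x, z) * w₁ (x, z)) := by
  have part1 : ∀ h : ℝ × ℝ × ℝ,
      ψ h = w₂ (h.1, h.2.2 - h.1 * h.2.1 / 2)
        + (h.2.1 - f (h.1, h.2.2 - h.1 * h.2.1 / 2))
          * w₁ (h.1, h.2.2 - h.1 * h.2.1 / 2) := by
    rintro ⟨h1, h2, h3⟩
    have hk := (flow_key hψ hYY h1 (h3 - h1 * h2 / 2) h2).2
    have he : ((h1 : ℝ), (h2 : ℝ), (h3 - h1 * h2 / 2) + h1 * h2 / 2) = (h1, h2, h3) := by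
      rw [Prod.mk.injEq, Prod.mk.injEq]
      exact ⟨rfl, rfl, by ring⟩
    rw [he] at hk
    show ψ (h1, h2, h3) = _
    rw [hw₂ h1 (h3 - h1 * h2 / 2), hw₁ h1 (h3 - h1 * h2 / 2), hk]
    ring
  have part2 : ∀ h : ℝ × ℝ × ℝ, Yop ψ h = w₁ (h.1, h.2.2 - h.1 * h.2.1 / 2) := by
    rintro ⟨h1, h2, h3⟩
    have hk := (flow_key hψ hYY h1 (h3 - h1 * h2 / 2) h2).1
    have he : ((h1 : ℝ), (h2 : ℝ), (h3 - h1 * h2 / 2) + h1 * h2 / 2) = (h1, h2, h3) := by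
      rw [Prod.mk.injEq, Prod.mk.injEq]
      exact ⟨rfl, rfl, by ring⟩
    rw [he] at hk
    show Yop ψ (h1, h2, h3) = _
    rw [hw₁ h1 (h3 - h1 * h2 / 2)]
    exact hk
  refine ⟨part1, part2, ?_⟩
  intro x z
  set f0 : ℝ := f (x, z) with hf0
  -- smoothness of w₁, w₂
  have hw1eq : w₁ = fun q : ℝ × ℝ => Yop ψ (q.1, 0, q.2) := by
    funext q; obtain ⟨a, b⟩ := q; exact hw₁ a b
  have hw1smooth : ContDiff ℝ 1 w₁ := by
    rw [hw1eq]
    exact ((contDiff_Yop hψ).comp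
      (contDiff_fst.prodMk (contDiff_const.prodMk contDiff_snd))).of_le (by simp)
  have hw2eq : w₂ = fun q : ℝ × ℝ => ψ (q.1, 0, q.2) + f q * w₁ q := by
    funext q; obtain ⟨a, b⟩ := q; rw [hw₂ a b, hw₁ a b]
  have hw2C1 : ContDiff ℝ 1 w₂ := by
    rw [hw2eq]
    exact (((hψ.of_le (by simp)).comp
      (contDiff_fst.prodMk (contDiff_const.prodMk contDiff_snd))).add (hf.mul hw1smooth))
  -- curves
  set γ : ℝ → ℝ × ℝ × ℝ := fun s => (x + s, f0, z + x * f0 / 2 - f0 * s / 2) with hγ_def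
  set σ : ℝ → ℝ × ℝ := fun s => (x + s, z - f0 * s) with hσ_def
  have hγ : HasDerivAt γ (1, 0, -f0 / 2) 0 := by
    have h3 : HasDerivAt (fun s : ℝ => z + x * f0 / 2 - f0 * s / 2) (-f0 / 2) 0 := by
      simpa [neg_div, Pi.sub_def] using
        (hasDerivAt_const (0:ℝ) (z + x * f0 / 2)).sub
          (((hasDerivAt_id (0:ℝ)).const_mul f0).div_const 2)
    have h1 : HasDerivAt (fun s : ℝ => x + s) 1 0 := by
      simpa using (hasDerivAt_id (0:ℝ)).const_add x
    exact h1.prodMk ((hasDerivAt_const 0 f0).prodMk h3)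
  have hσ : HasDerivAt σ (1, -f0) 0 := by
    have h1 : HasDerivAt (fun s : ℝ => x + s) 1 0 := by
      simpa using (hasDerivAt_id (0:ℝ)).const_add x
    have h2 : HasDerivAt (fun s : ℝ => z - f0 * s) (-f0) 0 := by
      simpa [Pi.sub_def] using (hasDerivAt_const (0:ℝ) z).sub ((hasDerivAt_id (0:ℝ)).const_mul f0)
    exact h1.prodMk h2
  have hγ0 : γ 0 = (x, f0, z + x * f0 / 2) := by simp [hγ_def]
  have hσ0 : σ 0 = (x, z) := by simp [hσ_def]
  -- derivative of ψ ∘ γ is Xψ at the graph point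
  have H1 : HasDerivAt (fun s => ψ (γ s)) (Xop ψ (x, f0, z + x * f0 / 2)) 0 := by
    have hF : HasFDerivAt ψ (fderiv ℝ ψ (x, f0, z + x * f0 / 2)) (γ 0) := by
      rw [hγ0]; exact (hψ.differentiable (by simp) _).hasFDerivAt
    have := hF.comp_hasDerivAt 0 hγ
    simpa [Xop, Function.comp_def] using this
  -- rewrite ψ ∘ γ using part1
  have hfun : (fun s => ψ (γ s)) = fun s => w₂ (σ s) + (f0 - f (σ s)) * w₁ (σ s) := by
    funext s
    have := part1 (γ s)
    have hu : ((γ s).1, (γ s).2.2 - (γ s).1 * (γ s).2.1 / 2) = σ s := by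
      rw [Prod.mk.injEq]
      constructor
      · rfl
      · show (z + x * f0 / 2 - f0 * s / 2) - (x + s) * f0 / 2 = z - f0 * s
        ring
    rw [hu] at this
    have h21 : (γ s).2.1 = f0 := rfl
    rw [h21] at this
    exact this
  rw [hfun] at H1
  -- derivative of the right-hand side
  have hdw2 : HasDerivAt (fun s => w₂ (σ s)) (fderiv ℝ w₂ (x, z) (1, -f0)) 0 := by
    have hF : HasFDerivAt w₂ (fderiv ℝ w₂ (x, z)) (σ 0) := by
      rw [hσ0]; exact (hw2C1.differentiable one_ne_zero _).hasFDerivAt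
    exact hF.comp_hasDerivAt 0 hσ
  have hdf : HasDerivAt (fun s => f (σ s)) (fderiv ℝ f (x, z) (1, -f0)) 0 := by
    have hF : HasFDerivAt f (fderiv ℝ f (x, z)) (σ 0) := by
      rw [hσ0]; exact (hf.differentiable one_ne_zero _).hasFDerivAt
    exact hF.comp_hasDerivAt 0 hσ
  have hdw1 : HasDerivAt (fun s => w₁ (σ s)) (fderiv ℝ w₁ (x, z) (1, -f0)) 0 := by
    have hF : HasFDerivAt w₁ (fderiv ℝ w₁ (x, z)) (σ 0) := by
      rw [hσ0]; exact (hw1smooth.differentiable one_ne_zero _).hasFDerivAt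
    exact hF.comp_hasDerivAt 0 hσ
  have H2 : HasDerivAt (fun s => w₂ (σ s) + (f0 - f (σ s)) * w₁ (σ s))
      (fderiv ℝ w₂ (x, z) (1, -f0)
        + ((0 - fderiv ℝ f (x, z) (1, -f0)) * w₁ (σ 0)
          + (f0 - f (σ 0)) * fderiv ℝ w₁ (x, z) (1, -f0))) 0 :=
    hdw2.add (((hasDerivAt_const (0:ℝ) f0).sub hdf).mul hdw1)
  have huniq := H1.unique H2
  rw [hσ0, ← hf0, sub_self, zero_mul, add_zero, zero_sub] at huniq
  show Xop ψ (x, f0, z + x * f0 / 2) = _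
  rw [huniq, igrad, igrad, pdx, pdz, pdx, pdz, clm_pair (fderiv ℝ w₂ (x, z)) f0,
    clm_pair (fderiv ℝ f (x, z)) f0]
  rw [← hf0]
  ring
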